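/- arXiv:math/0610245 — 2 statements merged into one kernel-verified Lean document; each statement's English description precedes it below -/
import Mathlib

section
/- For every integer k ≥ 1 there exists a constant C > 0 (independent of m) such that for every integer m ≥ 1 and all indices i₁, …, i_k ∈ {1, …, m}, one has |E[ ĝ_{i₁ i₂} · ĝ_{i₂ i₃} ⋯ ĝ_{i_{k−1} i_k} · ĝ_{i_k i₁} ]| ≤ C·e^{−m^{m−1/2}}, where ĝ_{ij} := 1_{{Σ_{1≤p,q≤m} |g_{pq}|² > m^{2m}}} · g_{ij}. -/
open MeasureTheory

/-- The standard complex Gaussian probability measure on `ℂ`, with density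
`z ↦ (1/π) · exp (-|z|²)` with respect to Lebesgue measure on `ℂ ≅ ℝ²`. -/
noncomputable def stdComplexGaussian : Measure ℂ :=
  volume.withDensity fun z => ENNReal.ofReal (Real.exp (-(‖z‖) ^ 2) / Real.pi)

/-- The joint law of the i.i.d. family `(g_{ij})_{1 ≤ i,j ≤ m}` of standard complex
Gaussian variables, realized as the coordinate functions on `(ℂ^{m×m}, γ^{⊗m²})`. -/
noncomputable def gaussianFamily (m : ℕ) : Measure (Fin m × Fin m → ℂ) :=
  Measure.pi fun _ => stdComplexGaussian

/-- `ĝ_{ij} = 1_{Σ_{p,q} |g_{pq}|² > m^{2m}} · g_{ij}` : the Gaussian entries restricted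
to the truncation event. -/
noncomputable def ghat (m : ℕ) (g : Fin m × Fin m → ℂ) (i j : Fin m) : ℂ :=
  if (m : ℝ) ^ (2 * m) < ∑ p : Fin m × Fin m, (‖g p‖) ^ 2 then g (i, j) else 0

/-!
The cyclic product vanishes off the truncation event `S = ∑ |g_pq|² > m^{2m}`. On it every factor
obeys `|g_e| ≤ ε^{-1/2} e^{εS}` and `1 ≤ e^{ε (S - m^{2m})}`, so with `(k + 1) ε = 1/2` the integrand
is bounded by `ε^{-k/2} e^{-ε m^{2m}} e^{S/2}`. Since `E[e^{S/2}] = 2^{m²}`, it remains to compare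
exponents: `m² + m^{m - 1/2} ≤ 2 m^m ≤ ε m^{2m} + ε⁻¹`.
-/

open Real

lemma integral_exp_neg_mul_norm_sq {b : ℝ} (hb : 0 < b) :
    ∫ z : ℂ, exp (-b * ‖z‖ ^ 2) = π / b := by
  simpa [Complex.finrank_real_complex] using
    GaussianFourier.integral_rexp_neg_mul_sq_norm (V := ℂ) hb

lemma integrable_exp_neg_mul_norm_sq {b : ℝ} (hb : 0 < b) :
    Integrable fun z : ℂ => exp (-b * ‖z‖ ^ 2) :=
  Integrable.of_integral_ne_zero <| by rw [integral_exp_neg_mul_norm_sq hb]; positivity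

lemma stdComplexGaussian_density_mul_exp_mul_norm_sq (a : ℝ) (z : ℂ) :
    (ENNReal.ofReal (exp (-(‖z‖) ^ 2) / π)).toReal * exp (a * ‖z‖ ^ 2)
      = π⁻¹ * exp (-(1 - a) * ‖z‖ ^ 2) := by
  rw [ENNReal.toReal_ofReal (by positivity), div_eq_inv_mul, mul_assoc, ← exp_add]
  ring_nf

lemma integrable_exp_mul_norm_sq_stdComplexGaussian {a : ℝ} (ha : a < 1) :
    Integrable (fun z : ℂ => exp (a * ‖z‖ ^ 2)) stdComplexGaussian := by
  rw [stdComplexGaussian, integrable_withDensity_iff_integrable_smul' (by fun_prop)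
    (.of_forall fun _ => ENNReal.ofReal_lt_top)]
  simp only [smul_eq_mul, stdComplexGaussian_density_mul_exp_mul_norm_sq]
  exact (integrable_exp_neg_mul_norm_sq (sub_pos.2 ha)).const_mul _

lemma integral_exp_mul_norm_sq_stdComplexGaussian {a : ℝ} (ha : a < 1) :
    ∫ z, exp (a * ‖z‖ ^ 2) ∂stdComplexGaussian = (1 - a)⁻¹ := by
  rw [stdComplexGaussian, integral_withDensity_eq_integral_toReal_smul (by fun_prop)
    (.of_forall fun _ => ENNReal.ofReal_lt_top)]
  simp only [smul_eq_mul, stdComplexGaussian_density_mul_exp_mul_norm_sq]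
  rw [integral_const_mul, integral_exp_neg_mul_norm_sq (sub_pos.2 ha)]
  field_simp

instance : IsProbabilityMeasure stdComplexGaussian := by
  have h := integral_exp_mul_norm_sq_stdComplexGaussian (a := 0) zero_lt_one
  simp only [zero_mul, exp_zero, sub_zero, inv_one] at h
  rw [integral_const, smul_eq_mul, mul_one, measureReal_def, ENNReal.toReal_eq_one_iff] at h
  exact ⟨h⟩

section

variable {ι : Type*} [Fintype ι]

lemma exp_mul_sum_norm_sq_eq_prod (a : ℝ) (g : ι → ℂ) :
    exp (a * ∑ p, ‖g p‖ ^ 2) = ∏ p, exp (a * ‖g p‖ ^ 2) := by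
  rw [Finset.mul_sum, exp_sum]

lemma integrable_exp_mul_sum_norm_sq_pi_stdComplexGaussian {a : ℝ} (ha : a < 1) :
    Integrable (fun g : ι → ℂ => exp (a * ∑ p, ‖g p‖ ^ 2))
      (Measure.pi fun _ => stdComplexGaussian) := by
  simp only [exp_mul_sum_norm_sq_eq_prod]
  exact Integrable.fintype_prod fun _ => integrable_exp_mul_norm_sq_stdComplexGaussian ha

lemma integral_exp_mul_sum_norm_sq_pi_stdComplexGaussian {a : ℝ} (ha : a < 1) :
    ∫ g : ι → ℂ, exp (a * ∑ p, ‖g p‖ ^ 2) ∂Measure.pi (fun _ => stdComplexGaussian)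
      = (1 - a)⁻¹ ^ Fintype.card ι := by
  simp only [exp_mul_sum_norm_sq_eq_prod]
  rw [integral_fintype_prod_eq_pow (fun z : ℂ => exp (a * ‖z‖ ^ 2)),
    integral_exp_mul_norm_sq_stdComplexGaussian ha]

lemma le_exp_sq (y : ℝ) : y ≤ exp (y ^ 2) := by
  nlinarith [add_one_le_exp (y ^ 2), sq_nonneg (y - 1)]

lemma le_sqrt_inv_mul_exp_mul_sq {ε : ℝ} (hε : 0 < ε) (t : ℝ) :
    t ≤ √ε⁻¹ * exp (ε * t ^ 2) := by
  have h := le_exp_sq (√ε * t)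
  rw [mul_pow, sq_sqrt hε.le] at h
  rwa [sqrt_inv, inv_mul_eq_div, le_div_iff₀' (sqrt_pos.2 hε)]

lemma norm_prod_le_of_norm_sq_le {z : ι → ℂ} {S ε : ℝ} (hε : 0 < ε)
    (hz : ∀ j, ‖z j‖ ^ 2 ≤ S) :
    ‖∏ j, z j‖ ≤ √ε⁻¹ ^ Fintype.card ι * exp (Fintype.card ι * (ε * S)) := by
  calc ‖∏ j, z j‖ = ∏ j, ‖z j‖ := norm_prod _ _
    _ ≤ ∏ _j : ι, √ε⁻¹ * exp (ε * S) := by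
        gcongr with j
        exact (le_sqrt_inv_mul_exp_mul_sq hε _).trans (by gcongr; exact hz j)
    _ = √ε⁻¹ ^ Fintype.card ι * exp (Fintype.card ι * (ε * S)) := by
        rw [Finset.prod_const, Finset.card_univ, mul_pow, exp_nat_mul]

lemma norm_prod_ghat_le [Nonempty ι] {m : ℕ} (g : Fin m × Fin m → ℂ) (a b : ι → Fin m)
    {ε : ℝ} (hε : 0 < ε) :
    ‖∏ j, ghat m g (a j) (b j)‖
      ≤ √ε⁻¹ ^ Fintype.card ι * exp (-(ε * (m : ℝ) ^ (2 * m)))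
        * exp ((Fintype.card ι + 1) * ε * ∑ p, ‖g p‖ ^ 2) := by
  by_cases hS : (m : ℝ) ^ (2 * m) < ∑ p, ‖g p‖ ^ 2
  · simp only [ghat, if_pos hS]
    refine (norm_prod_le_of_norm_sq_le hε fun j =>
      Finset.single_le_sum (f := fun p => ‖g p‖ ^ 2) (fun _ _ => by positivity)
        (Finset.mem_univ _)).trans ?_
    rw [mul_assoc, ← exp_add]
    gcongr
    linarith [mul_lt_mul_of_pos_left hS hε]
  · have : ∏ j, ghat m g (a j) (b j) = 0 :=
      Finset.prod_eq_zero (Finset.mem_univ (Classical.arbitrary ι)) (if_neg hS)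
    rw [this, norm_zero]
    positivity

end

lemma two_mul_le_mul_sq_add_inv {ε : ℝ} (hε : 0 < ε) (x : ℝ) : 2 * x ≤ ε * x ^ 2 + ε⁻¹ := by
  have h : 0 ≤ ε⁻¹ * (ε * x - 1) ^ 2 := by positivity
  have : ε⁻¹ * (ε * x - 1) ^ 2 = ε * x ^ 2 + ε⁻¹ - 2 * x := by field_simp; ring
  linarith

lemma sq_le_pow_self {m : ℕ} (hm : 1 ≤ m) : (m : ℝ) ^ 2 ≤ (m : ℝ) ^ m := by
  obtain rfl | h2 := hm.eq_or_lt
  · norm_num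
  · exact pow_le_pow_right₀ (by exact_mod_cast hm) h2

lemma exp_neg_mul_pow_two_mul_mul_two_pow_le {ε : ℝ} (hε : 0 < ε) {m : ℕ} (hm : 1 ≤ m) :
    exp (-(ε * (m : ℝ) ^ (2 * m))) * 2 ^ (m * m)
      ≤ exp ε⁻¹ * exp (-(m : ℝ) ^ ((m : ℝ) - 1 / 2)) := by
  have h2 : (2 : ℝ) ^ (m * m) ≤ exp ((m : ℝ) ^ 2) := by
    calc (2 : ℝ) ^ (m * m) ≤ exp 1 ^ (m * m) := by gcongr; linarith [add_one_le_exp 1]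
      _ = exp ((m : ℝ) ^ 2) := by rw [exp_one_pow]; push_cast; ring_nf
  have hrpow : (m : ℝ) ^ ((m : ℝ) - 1 / 2) ≤ (m : ℝ) ^ m := by
    rw [← rpow_natCast]
    exact rpow_le_rpow_of_exponent_le (by exact_mod_cast hm) (by linarith)
  have hamgm := two_mul_le_mul_sq_add_inv hε ((m : ℝ) ^ m)
  rw [← pow_mul, mul_comm m 2] at hamgm
  calc exp (-(ε * (m : ℝ) ^ (2 * m))) * 2 ^ (m * m)
      ≤ exp (-(ε * (m : ℝ) ^ (2 * m))) * exp ((m : ℝ) ^ 2) := by gcongr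
    _ ≤ exp ε⁻¹ * exp (-(m : ℝ) ^ ((m : ℝ) - 1 / 2)) := by
        rw [← exp_add, ← exp_add]
        exact exp_le_exp.2 (by linarith [sq_le_pow_self hm])

/-- For each `k ≥ 1` there is a constant `C > 0`, independent of `m`, such that for
every `m ≥ 1` and all indices `i₁, …, i_k ∈ {1, …, m}` one has
`|E[ĝ_{i₁ i₂} ĝ_{i₂ i₃} ⋯ ĝ_{i_k i₁}]| ≤ C · e^{-m^{m - 1/2}}`. -/
theorem cyclic_truncated_moment_bound (k : ℕ) (hk : 1 ≤ k) :
    ∃ C : ℝ, 0 < C ∧ ∀ m : ℕ, 1 ≤ m → ∀ i : Fin k → Fin m,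
      ‖(∫ g : Fin m × Fin m → ℂ,
            (∏ j : Fin k, ghat m g (i j) (i (finRotate k j))) ∂gaussianFamily m)‖
        ≤ C * Real.exp (-(m : ℝ) ^ ((m : ℝ) - 1 / 2)) := by
  have : Nonempty (Fin k) := ⟨⟨0, hk⟩⟩
  set ε : ℝ := (2 * (k + 1))⁻¹
  have hε : 0 < ε := by positivity
  have hε_half : ((k : ℝ) + 1) * ε = 1 / 2 := by simp only [ε]; field_simp
  refine ⟨√ε⁻¹ ^ k * exp ε⁻¹, by positivity, fun m hm i => ?_⟩
  have hbound := fun g => norm_prod_ghat_le (m := m) g i (i ∘ finRotate k) hε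
  simp only [Fintype.card_fin, hε_half] at hbound
  calc ‖∫ g, ∏ j, ghat m g (i j) (i (finRotate k j)) ∂gaussianFamily m‖
      ≤ ∫ g, ‖∏ j, ghat m g (i j) (i (finRotate k j))‖ ∂gaussianFamily m :=
        norm_integral_le_integral_norm _
    _ ≤ ∫ g, √ε⁻¹ ^ k * exp (-(ε * (m : ℝ) ^ (2 * m))) * exp (1 / 2 * ∑ p, ‖g p‖ ^ 2)
          ∂gaussianFamily m :=
        integral_mono_of_nonneg (.of_forall fun _ => norm_nonneg _)
          ((integrable_exp_mul_sum_norm_sq_pi_stdComplexGaussian (by norm_num)).const_mul _)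
          (.of_forall hbound)
    _ = √ε⁻¹ ^ k * (exp (-(ε * (m : ℝ) ^ (2 * m))) * 2 ^ (m * m)) := by
        rw [integral_const_mul, gaussianFamily,
          integral_exp_mul_sum_norm_sq_pi_stdComplexGaussian (by norm_num)]
        norm_num [mul_assoc]
    _ ≤ √ε⁻¹ ^ k * exp ε⁻¹ * exp (-(m : ℝ) ^ ((m : ℝ) - 1 / 2)) := by
        rw [mul_assoc]
        exact mul_le_mul_of_nonneg_left (exp_neg_mul_pow_two_mul_mul_two_pow_le hε hm)
          (by positivity)
end

section
/- For every integer k ≥ 1 and every choice of exponents ε₁, …, ε_k ∈ {1, *}, the mixed moments of the truncated-away part of the Gaussian random matrix vanish asymptotically: τ'_m( (Ĝ^m)^{ε₁} (Ĝ^m)^{ε₂} ⋯ (Ĝ^m)^{ε_k} ) → 0 as m → ∞, where X^1 = X and X^* is the conjugate transpose of X. In other words, Ĝ^m converges to 0 in *-distribution. -/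
open MeasureTheory Matrix

/-- `Ĝ^m = G^m − G̃^m = 1_{Σ_{i,j}|g_{ij}|² > m^{2m}} · (g_{ij}/√m)_{i,j}` : the
truncated-away part of the standard Gaussian random matrix. -/
noncomputable def Ghat (m : ℕ) (g : Fin m × Fin m → ℂ) : Matrix (Fin m) (Fin m) ℂ :=
  Matrix.of fun i j =>
    if (m : ℝ) ^ (2 * m) < ∑ p : Fin m × Fin m, (‖g p‖) ^ 2 then
      g (i, j) / (Real.sqrt m : ℂ) else 0

/-- The word `X^{ε₁} X^{ε₂} ⋯ X^{ε_k}` in a matrix `X` and its conjugate transpose,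
where an exponent `ε j = true` stands for `X^1 = X` and `ε j = false` for `X^* = Xᴴ`. -/
noncomputable def starWord {m k : ℕ} (ε : Fin k → Bool) (X : Matrix (Fin m) (Fin m) ℂ) :
    Matrix (Fin m) (Fin m) ℂ :=
  (List.ofFn fun j : Fin k => if ε j then X else Xᴴ).prod

/-! `Ĝ^m` vanishes unless `S = ∑ |g_ij|²` exceeds `m^{2m}`, and then its Frobenius norm is
`√(S/m) ≤ S`. The Frobenius norm is submultiplicative, invariant under `ᴴ` and dominates every
entry, so the normalized trace of a word of length `k ≥ 1` in `Ĝ^m, (Ĝ^m)ᴴ` is at most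
`1_{S > m^{2m}} S^k ≤ k! 4^k e^{-m^{2m}/4} e^{S/2}`. Since `E e^{S/2} = 2^{m²}`, the `*`-moments
are `O(e^{-m^{2m}/4} 2^{m²}) → 0`. -/

open Real Filter ProbabilityTheory

theorem lintegral_exp_neg_mul_norm_sq_complex {b : ℝ} (hb : 0 < b) :
    ∫⁻ z : ℂ, ENNReal.ofReal (exp (-b * ‖z‖ ^ 2)) = ENNReal.ofReal (π / b) := by
  -- integrability comes for free: the Bochner integral of a non-integrable function is `0`
  have h := GaussianFourier.integral_rexp_neg_mul_sq_norm (V := ℂ) hb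
  rw [Complex.finrank_real_complex, Nat.cast_ofNat, div_self two_ne_zero, rpow_one] at h
  rw [← ofReal_integral_eq_lintegral_ofReal
    (.of_integral_ne_zero (h ▸ (div_pos pi_pos hb).ne')) (.of_forall fun _ => (exp_pos _).le), h]

theorem lintegral_exp_mul_norm_sq_stdComplexGaussian {t : ℝ} (ht : t < 1) :
    ∫⁻ z, ENNReal.ofReal (exp (t * ‖z‖ ^ 2)) ∂stdComplexGaussian
      = ENNReal.ofReal (1 - t)⁻¹ := by
  have hdensity (z : ℂ) :
      ENNReal.ofReal (exp (-‖z‖ ^ 2) / π) * ENNReal.ofReal (exp (t * ‖z‖ ^ 2))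
        = ENNReal.ofReal π⁻¹ * ENNReal.ofReal (exp (-(1 - t) * ‖z‖ ^ 2)) := by
    rw [← ENNReal.ofReal_mul (by positivity), ← ENNReal.ofReal_mul (by positivity),
      div_eq_mul_inv, mul_right_comm, ← exp_add]
    ring_nf
  rw [stdComplexGaussian, lintegral_withDensity_eq_lintegral_mul _ (by fun_prop) (by fun_prop)]
  simp only [Pi.mul_apply, hdensity]
  rw [lintegral_const_mul' _ _ ENNReal.ofReal_ne_top,
    lintegral_exp_neg_mul_norm_sq_complex (sub_pos.2 ht), ← ENNReal.ofReal_mul (by positivity)]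
  field_simp [pi_pos.ne']

instance inst_s4 : IsProbabilityMeasure stdComplexGaussian :=
  ⟨by simpa using lintegral_exp_mul_norm_sq_stdComplexGaussian zero_lt_one⟩

theorem lintegral_pi_prod_eq_pow {ι X : Type*} [Fintype ι] [MeasurableSpace X] (μ : Measure X)
    [IsProbabilityMeasure μ] {f : X → ENNReal} (hf : Measurable f) :
    ∫⁻ x, ∏ i, f (x i) ∂Measure.pi (fun _ : ι => μ) = (∫⁻ x, f x ∂μ) ^ Fintype.card ι := by
  rw [lintegral_prod_eq_prod_lintegral_of_indepFun _ _
      (iIndepFun_pi (X := fun _ => f) fun _ => hf.aemeasurable)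
      fun i => hf.comp (measurable_pi_apply i)]
  simp_rw [(measurePreserving_eval (fun _ : ι => μ) _).lintegral_comp hf, Finset.prod_const,
    Finset.card_univ]

theorem lintegral_exp_mul_sum_norm_sq_gaussianFamily (m : ℕ) {t : ℝ} (ht : t < 1) :
    ∫⁻ g, ENNReal.ofReal (exp (t * ∑ p, ‖g p‖ ^ 2)) ∂gaussianFamily m
      = ENNReal.ofReal (1 - t)⁻¹ ^ (m * m) := by
  simp_rw [Finset.mul_sum, exp_sum, ENNReal.ofReal_prod_of_nonneg fun _ _ => (exp_pos _).le]
  rw [gaussianFamily,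
    lintegral_pi_prod_eq_pow _ (f := fun z : ℂ => ENNReal.ofReal (exp (t * ‖z‖ ^ 2)))
      (by fun_prop),
    lintegral_exp_mul_norm_sq_stdComplexGaussian ht, Fintype.card_prod, Fintype.card_fin]

section Frobenius

open scoped Matrix.Norms.Frobenius

theorem Matrix.norm_entry_le_frobenius_norm {m n α : Type*} [Fintype m] [Fintype n]
    [SeminormedAddCommGroup α] (A : Matrix m n α) (i : m) (j : n) : ‖A i j‖ ≤ ‖A‖ :=
  (PiLp.norm_apply_le (WithLp.toLp 2 (A i)) j).trans
    (PiLp.norm_apply_le (WithLp.toLp 2 fun i => WithLp.toLp 2 (A i)) i)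

theorem Matrix.norm_trace_le_card_mul_frobenius_norm {n α : Type*} [Fintype n]
    [SeminormedAddCommGroup α] (A : Matrix n n α) : ‖A.trace‖ ≤ Fintype.card n * ‖A‖ :=
  calc ‖A.trace‖ ≤ ∑ i, ‖A i i‖ := norm_sum_le _ _
    _ ≤ ∑ _i : n, ‖A‖ := Finset.sum_le_sum fun i _ => A.norm_entry_le_frobenius_norm i i
    _ = Fintype.card n * ‖A‖ := by simp

theorem norm_starWord_le {m k : ℕ} (hk : k ≠ 0) (ε : Fin k → Bool)
    (X : Matrix (Fin m) (Fin m) ℂ) : ‖starWord ε X‖ ≤ ‖X‖ ^ k := by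
  refine (List.norm_prod_le' (by simpa using hk)).trans_eq ?_
  have : ∀ j, ‖if ε j then X else Xᴴ‖ = ‖X‖ := fun j => by
    split_ifs <;> simp only [Matrix.frobenius_norm_conjTranspose]
  simp [List.map_ofFn, Function.comp_def, this]

theorem norm_normalizedTrace_starWord_le {m k : ℕ} (hk : k ≠ 0) (ε : Fin k → Bool)
    (X : Matrix (Fin m) (Fin m) ℂ) : ‖(m : ℂ)⁻¹ * (starWord ε X).trace‖ ≤ ‖X‖ ^ k := by
  rcases Nat.eq_zero_or_pos m with rfl | hm
  · simp
  rw [norm_mul, norm_inv, Complex.norm_natCast, inv_mul_le_iff₀ (by exact_mod_cast hm)]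
  refine ((starWord ε X).norm_trace_le_card_mul_frobenius_norm).trans ?_
  rw [Fintype.card_fin]
  gcongr
  exact norm_starWord_le hk ε X

theorem frobenius_norm_Ghat (m : ℕ) (g : Fin m × Fin m → ℂ) :
    ‖Ghat m g‖
      = if (m : ℝ) ^ (2 * m) < ∑ p, ‖g p‖ ^ 2 then √((∑ p, ‖g p‖ ^ 2) / m) else 0 := by
  split_ifs with h
  · have : Ghat m g = ((√m)⁻¹ : ℂ) • Matrix.of fun i j => g (i, j) := by
      ext i j; simp [Ghat, h, div_eq_inv_mul]
    rw [this, norm_smul, Matrix.frobenius_norm_def, ← Real.sqrt_eq_rpow, norm_inv,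
      Complex.norm_real, Real.norm_of_nonneg (Real.sqrt_nonneg _),
      Real.sqrt_div' _ (Nat.cast_nonneg _), div_eq_inv_mul, ← Fintype.sum_prod_type']
    simp only [Matrix.of_apply, Real.rpow_two]
  · have : Ghat m g = 0 := by ext i j; simp [Ghat, h]
    rw [this, norm_zero]

end Frobenius

theorem pow_le_factorial_mul_pow_mul_exp_div {x a : ℝ} (hx : 0 ≤ x) (ha : 0 < a) (k : ℕ) :
    x ^ k ≤ k.factorial * a ^ k * exp (x / a) := by
  have h := pow_div_factorial_le_exp (x := x / a) (div_nonneg hx ha.le) k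
  rw [div_pow, div_div, div_le_iff₀ (by positivity)] at h
  linarith

theorem norm_normalizedTrace_starWord_Ghat_le {m k : ℕ} (hm : 1 ≤ m) (hk : k ≠ 0)
    (ε : Fin k → Bool) (g : Fin m × Fin m → ℂ) :
    ‖(m : ℂ)⁻¹ * (starWord ε (Ghat m g)).trace‖
      ≤ k.factorial * 4 ^ k * exp (-(m : ℝ) ^ (2 * m) / 4)
        * exp (1 / 2 * ∑ p, ‖g p‖ ^ 2) := by
  refine (norm_normalizedTrace_starWord_le hk ε _).trans ?_
  set S := ∑ p, ‖g p‖ ^ 2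
  have hm' : (1 : ℝ) ≤ m := by exact_mod_cast hm
  rw [frobenius_norm_Ghat]
  split_ifs with hTS
  · have hS : 1 ≤ S := (one_le_pow₀ hm').trans hTS.le
    calc √(S / m) ^ k ≤ S ^ k := by
          gcongr
          exact (Real.sqrt_le_sqrt (div_le_self (by linarith) hm')).trans
            (Real.sqrt_le_self_iff.2 (Or.inr hS))
      _ ≤ k.factorial * 4 ^ k * exp (S / 4) :=
          pow_le_factorial_mul_pow_mul_exp_div (by linarith) (by norm_num) k
      _ ≤ k.factorial * 4 ^ k * (exp (-(m : ℝ) ^ (2 * m) / 4) * exp (1 / 2 * S)) := by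
          rw [← exp_add]
          gcongr
          linarith
      _ = _ := by ring
  · rw [zero_pow hk]
    positivity

theorem norm_integral_normalizedTrace_starWord_Ghat_le {m k : ℕ} (hm : 1 ≤ m) (hk : k ≠ 0)
    (ε : Fin k → Bool) :
    ‖∫ g, (m : ℂ)⁻¹ * (starWord ε (Ghat m g)).trace ∂gaussianFamily m‖
      ≤ k.factorial * 4 ^ k * exp (-(m : ℝ) ^ (2 * m) / 4) * 2 ^ (m * m) := by
  refine (norm_integral_le_lintegral_norm _).trans (ENNReal.toReal_le_of_le_ofReal
    (by positivity) ?_)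
  calc ∫⁻ g, ENNReal.ofReal ‖(m : ℂ)⁻¹ * (starWord ε (Ghat m g)).trace‖ ∂gaussianFamily m
      ≤ ∫⁻ g, ENNReal.ofReal (k.factorial * 4 ^ k * exp (-(m : ℝ) ^ (2 * m) / 4))
          * ENNReal.ofReal (exp (1 / 2 * ∑ p, ‖g p‖ ^ 2)) ∂gaussianFamily m := by
        refine lintegral_mono fun g => ?_
        rw [← ENNReal.ofReal_mul (by positivity)]
        exact ENNReal.ofReal_le_ofReal (norm_normalizedTrace_starWord_Ghat_le hm hk ε g)
    _ = ENNReal.ofReal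
          (k.factorial * 4 ^ k * exp (-(m : ℝ) ^ (2 * m) / 4) * 2 ^ (m * m)) := by
        rw [lintegral_const_mul' _ _ ENNReal.ofReal_ne_top,
          lintegral_exp_mul_sum_norm_sq_gaussianFamily m (by norm_num : (1 / 2 : ℝ) < 1),
          ← ENNReal.ofReal_pow (by norm_num), ← ENNReal.ofReal_mul (by positivity)]
        norm_num

theorem tendsto_exp_neg_pow_two_mul_div_four_mul_two_pow_sq :
    Tendsto (fun m : ℕ => exp (-(m : ℝ) ^ (2 * m) / 4) * 2 ^ (m * m)) atTop (nhds 0) := by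
  refine squeeze_zero' (.of_forall fun m => by positivity) ?_
    (tendsto_exp_neg_atTop_nhds_zero.comp tendsto_natCast_atTop_atTop)
  filter_upwards [eventually_ge_atTop 3] with m hm
  have hm' : (3 : ℝ) ≤ m := by exact_mod_cast hm
  have hpow : (2 : ℝ) ^ (m * m) ≤ exp (m ^ 2) := by
    calc (2 : ℝ) ^ (m * m) ≤ exp 1 ^ (m * m) := by
          gcongr
          linarith [add_one_le_exp (1 : ℝ)]
      _ = exp (m ^ 2) := by rw [← exp_nat_mul]; push_cast; ring_nf
  have hm6 : (m : ℝ) ^ 6 ≤ m ^ (2 * m) := pow_le_pow_right₀ (by linarith) (by omega)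
  calc exp (-(m : ℝ) ^ (2 * m) / 4) * 2 ^ (m * m)
      ≤ exp (-(m : ℝ) ^ (2 * m) / 4) * exp (m ^ 2) := by gcongr
    _ ≤ exp (-m) := by
        rw [← exp_add]
        gcongr
        nlinarith [pow_le_pow_left₀ (by norm_num) hm' 4]

/-- All mixed `*`-moments of `Ĝ^m` vanish as `m → ∞`:
`τ'_m((Ĝ^m)^{ε₁} ⋯ (Ĝ^m)^{ε_k}) → 0`, i.e. `Ĝ^m` converges to `0` in `*`-distribution. -/
theorem Ghat_tendsto_zero_in_star_distribution (k : ℕ) (hk : 1 ≤ k) (ε : Fin k → Bool) :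
    Filter.Tendsto
      (fun m : ℕ =>
        ∫ g : Fin m × Fin m → ℂ,
          ((m : ℂ)⁻¹ * Matrix.trace (starWord ε (Ghat m g))) ∂gaussianFamily m)
      Filter.atTop (nhds 0) := by
  rw [tendsto_zero_iff_norm_tendsto_zero]
  have hbound := (tendsto_exp_neg_pow_two_mul_div_four_mul_two_pow_sq.const_mul
    (k.factorial * 4 ^ k : ℝ))
  rw [mul_zero] at hbound
  refine squeeze_zero' (.of_forall fun _ => norm_nonneg _) ?_ hbound
  filter_upwards [eventually_ge_atTop 1] with m hm
  rw [← mul_assoc]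
  exact norm_integral_normalizedTrace_starWord_Ghat_le hm (by omega) ε
end
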